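/- Fix 0 < k < n. Define the map φ from the set of equivalence classes (up to row permutation and up to simultaneous shift of all rows by multiples of n) of (k+1)×∞ column-periodic matrices A (with period some multiple of n) whose columns are standard basis vectors, all rows nonzero and not identically zero on any period, and shift-by-n invariant up to row permutation, to S̃_n^{k,+}, by A ↦ f_A where f_A(i) = min{j ≥ i : v_j = v_{i−1}}. Then φ is a bijection onto S̃_n^{k,+} = {f: ℤ→ℤ bijective : f(i+n)=f(i)+n, f(i) ≥ i, ∑_{i=1}^n(f(i)−i)=kn}. -/

import Mathlib

/-! Write `g x = f (x + 1)`. `IsFA v f` says that `g x` is the next position after `x` carrying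
the same column as `x`, so the rows of the matrix are the orbits of `g`. Every orbit crosses each
cut between `J` and `J + 1` exactly once, at its last point `≤ J`, so there are `k + 1` arcs
`j ≤ J < g j` over every cut. Counting the pairs `(j, J)` with `j ≤ J < g j` modulo the diagonal
shift by `n` in two ways gives `∑_{j ∈ [0, n)} (g j - j) = n (k + 1)`, i.e. `∑ (f i - i) = k n`.
Conversely, for `f ∈ S̃_n^{k,+}` the same count shows that `f ∘ s₊` has `k + 1` orbits, which
colour the columns, and the shift by `n` permutes these orbits. Finally a matrix is determined,
up to renaming its rows, by the partition of `ℤ` into its rows, that is, by `f`. -/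

/-- A valid `(k+1) × ∞` column-periodic matrix (given by its columns `v`): columns are
standard basis vectors of `ℂ^{k+1}`, periodic with period a positive multiple of `n`,
all rows nonzero, and shifting the columns by `n` permutes the rows. -/
def ValidMatrix (k n : ℕ) (v : ℤ → Fin (k + 1) → ℂ) : Prop :=
  (∃ h : ℕ, 0 < h ∧ ∀ j : ℤ, v (j + h * n) = v j) ∧
  (∀ j : ℤ, ∃ ℓ : Fin (k + 1), v j = Pi.single ℓ 1) ∧
  (∀ ℓ : Fin (k + 1), ∃ j : ℤ, v j ℓ ≠ 0) ∧
  (∃ σ : Equiv.Perm (Fin (k + 1)), ∀ (j : ℤ) (ℓ : Fin (k + 1)), v (j + n) ℓ = v j (σ ℓ))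

/-- `f = f_A` for the matrix with columns `v`: `f i = min {j ≥ i : v j = v (i-1)}`. -/
def IsFA (v : ℤ → Fin (k + 1) → ℂ) (f : ℤ → ℤ) : Prop :=
  ∀ i : ℤ, IsLeast {j : ℤ | i ≤ j ∧ v j = v (i - 1)} (f i)

/-- Equivalence of matrices: up to a row permutation and a simultaneous shift of the
columns by a multiple of `n`. -/
def MatrixEquiv (k n : ℕ) (v v' : ℤ → Fin (k + 1) → ℂ) : Prop :=
  ∃ σ : Equiv.Perm (Fin (k + 1)), ∃ d : ℤ, ∀ (j : ℤ) (ℓ : Fin (k + 1)),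
    v' j ℓ = v (j + d * n) (σ ℓ)

/-- Membership in `S̃_n^{k,+}`. -/
def IsSkPlus (k n : ℕ) (f : ℤ → ℤ) : Prop :=
  Function.Bijective f ∧ (∀ i : ℤ, f (i + n) = f i + n) ∧ (∀ i : ℤ, i ≤ f i) ∧
    ∑ i ∈ Finset.Icc (1 : ℤ) n, (f i - i) = (k : ℤ) * n

open Finset Function

lemma Pi.single_one_inj {β R : Type*} [DecidableEq β] [Zero R] [One R] [NeZero (1 : R)]
    {a b : β} : (Pi.single a (1 : R) : β → R) = Pi.single b 1 ↔ a = b := by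
  refine ⟨fun h => by_contra fun hne => ?_, fun h => h ▸ rfl⟩
  simpa [Pi.single_apply, hne] using congrFun h a

lemma single_apply_perm {β R : Type*} [DecidableEq β] [Zero R] {b b' : β} (x : R)
    {σ : Equiv.Perm β} (hσ : σ b' = b) (ℓ : β) :
    (Pi.single b' x : β → R) ℓ = (Pi.single b x : β → R) (σ ℓ) := by
  subst hσ
  simp [Pi.single_apply]

lemma exists_perm_apply_eq_of_ker_eq {ι β : Type*} {c c' : ι → β} (hc : Surjective c)
    (hc' : Surjective c') (h : ∀ a b, c a = c b ↔ c' a = c' b) :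
    ∃ σ : Equiv.Perm β, ∀ j, σ (c' j) = c j := by
  obtain ⟨s, hs⟩ := hc'.hasRightInverse
  have key : ∀ j, c (s (c' j)) = c j := fun j => (h _ _).2 (hs _)
  refine ⟨Equiv.ofBijective (c ∘ s) ⟨fun a b hab => ?_, fun b => ?_⟩, key⟩
  · simpa [hs a, hs b] using (h _ _).1 hab
  · obtain ⟨j, rfl⟩ := hc b
    exact ⟨c' j, key j⟩

lemma periodic_orderOf_mul {β : Type*} {c : ℤ → β} {τ : Equiv.Perm β} {p : ℤ}
    (h : ∀ j, c (j + p) = τ (c j)) : Periodic c (orderOf τ * p) := by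
  have hpow : ∀ (m : ℕ) j, c (j + m * p) = (τ ^ m) (c j) := by
    intro m
    induction m with
    | zero => simp
    | succ m ih =>
      intro j
      rw [pow_succ', Equiv.Perm.mul_apply, ← ih, ← h]
      push_cast
      ring_nf
  intro j
  rw [hpow, pow_orderOf_eq_one, Equiv.Perm.one_apply]

lemma Function.Periodic.le_sum_Icc {φ : ℤ → ℤ} {n : ℤ} (hφ : Periodic φ n) (hn : 0 < n)
    (h0 : ∀ i, 0 ≤ φ i) (i : ℤ) : φ i ≤ ∑ j ∈ Icc 1 n, φ j := by
  obtain ⟨y, hy, hiy⟩ := hφ.exists_mem_Ico hn i 1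
  rw [hiy]
  refine single_le_sum (fun j _ => h0 j) ?_
  simp only [Set.mem_Ico] at hy
  simp only [mem_Icc]
  omega

lemma sum_Icc_sub_add (f : ℤ → ℤ) (n : ℕ) :
    ∑ i ∈ Icc 1 (n : ℤ), (f i - i) + n = ∑ j ∈ Ico 0 (n : ℤ), (f (j + 1) - j) := by
  have hshift := sum_Ico_add' (fun i => f i - i) 0 (n : ℤ) 1
  rw [zero_add] at hshift
  rw [← Ico_add_one_right_eq_Icc, ← hshift]
  simp [sub_add_eq_sub_sub, sum_sub_distrib]

lemma Function.Periodic.exists_le_apply_eq {α : Type*} {v : ℤ → α} {N : ℤ} (hv : Periodic v N)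
    (hN : 0 < N) (x J : ℤ) : ∃ t ≤ J, v t = v x := by
  obtain ⟨y, hy, hxy⟩ := hv.exists_mem_Ico hN x (J - N + 1)
  exact ⟨y, by simp only [Set.mem_Ico] at hy; omega, hxy.symm⟩

def IsNextOccurrence {α : Type*} (v : ℤ → α) (g : ℤ → ℤ) : Prop :=
  ∀ x, IsLeast {j | x < j ∧ v j = v x} (g x)

lemma isFA_iff {k : ℕ} {v : ℤ → Fin (k + 1) → ℂ} {f : ℤ → ℤ} :
    IsFA v f ↔ IsNextOccurrence v fun x => f (x + 1) := by
  refine ⟨fun hf x => ?_, fun hf i => ?_⟩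
  · simpa [Int.add_one_le_iff] using hf (x + 1)
  · simpa [Int.sub_one_lt_iff] using hf (i - 1)

-- The arcs `j ↦ g j` passing over the cut between `J` and `J + 1`; `C` bounds the arc lengths
-- and only serves to make this a finset.
noncomputable def crossing (g : ℤ → ℤ) (C J : ℤ) : Finset ℤ := {j ∈ Ioc (J - C) J | J < g j}

lemma mem_crossing {g : ℤ → ℤ} {C J j : ℤ} (hC : ∀ j, g j ≤ j + C) :
    j ∈ crossing g C J ↔ j ≤ J ∧ J < g j := by
  have := hC j
  simp only [crossing, mem_filter, mem_Ioc]
  omega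

namespace IsNextOccurrence

variable {α : Type*} {v w : ℤ → α} {g : ℤ → ℤ}

lemma lt_apply (hg : IsNextOccurrence v g) (x : ℤ) : x < g x := (hg x).1.1

lemma apply_apply (hg : IsNextOccurrence v g) (x : ℤ) : v (g x) = v x := (hg x).1.2

lemma le_of_apply_eq (hg : IsNextOccurrence v g) {x j : ℤ} (hxj : x < j) (h : v j = v x) :
    g x ≤ j :=
  (hg x).2 ⟨hxj, h⟩

lemma apply_iterate (hg : IsNextOccurrence v g) (t : ℕ) (x : ℤ) : v (g^[t] x) = v x := by
  induction t with
  | zero => rfl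
  | succ t ih => rw [iterate_succ_apply', hg.apply_apply, ih]

lemma exists_iterate_eq (hg : IsNextOccurrence v g) {a b : ℤ} (hab : a ≤ b) (h : v a = v b) :
    ∃ t : ℕ, g^[t] a = b := by
  rcases hab.eq_or_lt with rfl | hlt
  · exact ⟨0, rfl⟩
  obtain ⟨t, ht⟩ := hg.exists_iterate_eq (hg.le_of_apply_eq hlt h.symm) ((hg.apply_apply a).trans h)
  exact ⟨t + 1, by rw [iterate_succ_apply, ht]⟩
termination_by (b - a).toNat
decreasing_by have := hg.lt_apply a; omega

lemma ker_eq (hv : IsNextOccurrence v g) (hw : IsNextOccurrence w g) (a b : ℤ) :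
    v a = v b ↔ w a = w b := by
  have key : ∀ {v w : ℤ → α}, IsNextOccurrence v g → IsNextOccurrence w g →
      ∀ a b, a ≤ b → v a = v b → w a = w b := by
    intro v w hv hw a b hab h
    obtain ⟨t, rfl⟩ := hv.exists_iterate_eq hab h
    exact (hw.apply_iterate t a).symm
  rcases le_total a b with hab | hab
  · exact ⟨key hv hw a b hab, key hw hv a b hab⟩
  · exact ⟨fun h => (key hv hw b a hab h.symm).symm, fun h => (key hw hv b a hab h.symm).symm⟩

lemma injective (hg : IsNextOccurrence v g) : Injective g := by
  have key : ∀ a b, a < b → g a ≠ g b := fun a b hab hg' =>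
    (hg.le_of_apply_eq hab (by rw [← hg.apply_apply a, hg', hg.apply_apply])).not_gt
      (hg'.symm ▸ hg.lt_apply b)
  intro a b h
  by_contra hne
  rcases lt_or_gt_of_ne hne with hab | hab
  exacts [key a b hab h, key b a hab h.symm]

lemma map_add (hg : IsNextOccurrence v g) {p : ℤ} (hp : ∀ a b, v (a + p) = v (b + p) ↔ v a = v b)
    (x : ℤ) : g (x + p) = g x + p := by
  have hup := hg.le_of_apply_eq (x := x + p) (j := g x + p) (by linarith [hg.lt_apply x])
    ((hp _ _).2 (hg.apply_apply x))
  have hdown := hg.le_of_apply_eq (x := x) (j := g (x + p) - p) (by linarith [hg.lt_apply (x + p)])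
    ((hp _ _).1 (by rw [sub_add_cancel, hg.apply_apply]))
  omega

lemma exists_crossing (hg : IsNextOccurrence v g) (hrec : ∀ x J, ∃ t ≤ J, v t = v x) (x J : ℤ) :
    ∃ t, t ≤ J ∧ J < g t ∧ v t = v x := by
  obtain ⟨t, ⟨htJ, htx⟩, hmax⟩ := Int.exists_greatest_of_bdd (P := fun t => t ≤ J ∧ v t = v x)
    ⟨J, fun _ h => h.1⟩ (hrec x J)
  refine ⟨t, htJ, not_le.1 fun hgt => ?_, htx⟩
  exact (hmax _ ⟨hgt, (hg.apply_apply t).trans htx⟩).not_gt (hg.lt_apply t)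

lemma surjective (hg : IsNextOccurrence v g) (hrec : ∀ x J, ∃ t ≤ J, v t = v x) :
    Surjective g := by
  intro m
  obtain ⟨t, htm, hmt, htx⟩ := hg.exists_crossing hrec m (m - 1)
  exact ⟨t, le_antisymm (hg.le_of_apply_eq (by omega) htx.symm) (by omega)⟩

lemma eq_of_crossing (hg : IsNextOccurrence v g) {J a b : ℤ} (ha : a ≤ J ∧ J < g a)
    (hb : b ≤ J ∧ J < g b) (h : v a = v b) : a = b := by
  have key : ∀ a b, J < g a → b ≤ J → v a = v b → ¬ a < b := fun a b ha hb h hab =>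
    (hg.le_of_apply_eq hab h.symm).not_gt (by omega)
  by_contra hne
  rcases lt_or_gt_of_ne hne with hab | hab
  exacts [key a b ha.2 hb.1 h hab, key b a hb.2 ha.1 h.symm hab]

lemma card_crossing (hg : IsNextOccurrence v g) (hrec : ∀ x J, ∃ t ≤ J, v t = v x) {C : ℤ}
    (hC : ∀ j, g j ≤ j + C) (J : ℤ) : #(crossing g C J) = (Set.range v).ncard := by
  have himage : v '' (crossing g C J) = Set.range v := by
    refine (Set.image_subset_range _ _).antisymm ?_
    rintro _ ⟨x, rfl⟩
    obtain ⟨t, htJ, hJt, htx⟩ := hg.exists_crossing hrec x J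
    exact ⟨t, (mem_crossing hC).2 ⟨htJ, hJt⟩, htx⟩
  have hinj : Set.InjOn v (crossing g C J) := fun a ha b hb hab =>
    hg.eq_of_crossing ((mem_crossing hC).1 ha) ((mem_crossing hC).1 hb) hab
  rw [← himage, hinj.ncard_image, Set.ncard_coe_finset]

end IsNextOccurrence

lemma sum_sub_eq_sum_card_crossing {g : ℤ → ℤ} {n C : ℤ} (hn : 0 < n)
    (hper : Periodic (fun j => g j - j) n) (hle : ∀ j, j ≤ g j) (hC : ∀ j, g j ≤ j + C) :
    ∑ j ∈ Ico 0 n, (g j - j) = ∑ J ∈ Ico 0 n, (#(crossing g C J) : ℤ) := by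
  have hshift : ∀ q j : ℤ, g (j - q * n) = g j - q * n := fun q j => by
    have := hper.sub_int_mul_eq (x := j) q
    simp only [Int.cast_id] at this
    linarith
  have hmod : ∀ b : ℤ, 0 ≤ b - b / n * n ∧ b - b / n * n < n := fun b =>
    ⟨sub_nonneg.2 (Int.ediv_mul_le b hn.ne'), by linarith [Int.lt_ediv_add_one_mul_self b hn]⟩
  -- swap the two coordinates, then translate both by the multiple of `n` that brings the new
  -- first coordinate into `[0, n)`; this is an involution on pairs with first coordinate there
  let φ : (_ : ℤ) × ℤ → (_ : ℤ) × ℤ := fun p => ⟨p.2 - p.2 / n * n, p.1 - p.2 / n * n⟩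
  have hφφ : ∀ p : (_ : ℤ) × ℤ, p.1 ∈ Ico 0 n → φ (φ p) = p := by
    rintro ⟨a, b⟩ hab
    obtain ⟨ha, ha'⟩ := mem_Ico.1 hab
    have : (a - b / n * n) / n = -(b / n) := by
      rw [sub_eq_add_neg, ← neg_mul, Int.add_mul_ediv_right _ _ hn.ne',
        Int.ediv_eq_zero_of_lt ha ha', zero_add]
    simp only [φ, this]
    congr 1 <;> ring
  have hlhs : ∑ j ∈ Ico 0 n, (g j - j) = #((Ico 0 n).sigma fun j => Ico j (g j)) := by
    rw [card_sigma]
    push_cast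
    exact sum_congr rfl fun j _ => by rw [Int.card_Ico, Int.toNat_of_nonneg (sub_nonneg.2 (hle j))]
  rw [hlhs, ← Nat.cast_sum, ← card_sigma]
  congr 1
  refine card_bij' (fun p _ => φ p) (fun p _ => φ p) ?_ ?_
    (fun p hp => hφφ p (mem_sigma.1 hp).1) (fun p hp => hφφ p (mem_sigma.1 hp).1)
  · rintro ⟨j, J⟩ hp
    simp only [φ, mem_sigma, mem_Ico, mem_crossing hC] at hp ⊢
    have := hshift (J / n) j
    have := hmod J
    omega
  · rintro ⟨J, j⟩ hp
    simp only [φ, mem_sigma, mem_Ico, mem_crossing hC] at hp ⊢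
    have := hshift (j / n) j
    have := hmod j
    omega

lemma IsNextOccurrence.sum_sub_eq {α : Type*} {v : ℤ → α} {g : ℤ → ℤ} {n C : ℤ}
    (hg : IsNextOccurrence v g) (hrec : ∀ x J, ∃ t ≤ J, v t = v x) (hC : ∀ j, g j ≤ j + C)
    (hn : 0 < n) (hgn : ∀ x, g (x + n) = g x + n) :
    ∑ j ∈ Ico 0 n, (g j - j) = n * (Set.range v).ncard := by
  rw [sum_sub_eq_sum_card_crossing hn (fun j => by simp only [hgn]; ring)
    (fun j => (hg.lt_apply j).le) hC]
  simp [hg.card_crossing hrec hC, Int.toNat_of_nonneg hn.le]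

lemma Setoid.exists_surjective_fin_of_card_quotient {ι : Type*} {s : Setoid ι} {m : ℕ}
    (h : Nat.card (Quotient s) = m + 1) :
    ∃ c : ι → Fin (m + 1), Surjective c ∧ ∀ a b, c a = c b ↔ s a b := by
  have : Finite (Quotient s) := Nat.finite_of_card_ne_zero (by omega)
  let ε := Finite.equivFinOfCardEq h
  exact ⟨ε ∘ Quotient.mk s, ε.surjective.comp Quotient.mk_surjective, fun a b => by
    simp only [comp_apply, ε.apply_eq_iff_eq, Quotient.eq]⟩

namespace Equiv.Perm

variable {e : Perm ℤ}

lemma strictMono_zpow_apply (he : ∀ x, x < e x) (x : ℤ) : StrictMono fun m : ℤ => (e ^ m) x :=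
  strictMono_int_of_lt_succ fun m => by
    simpa only [add_comm m 1, zpow_one_add, mul_apply] using he _

lemma exists_sameCycle_le (he : ∀ x, x < e x) (x J : ℤ) : ∃ t ≤ J, e.SameCycle t x := by
  have hdown : ∀ m : ℕ, (e ^ (-(m : ℤ))) x ≤ x - m := by
    intro m
    induction m with
    | zero => simp
    | succ m ih =>
      have := strictMono_zpow_apply he x (show -((m + 1 : ℕ) : ℤ) < -(m : ℤ) by omega)
      simp only at this
      omega
  exact ⟨(e ^ (-((x - J).toNat : ℤ))) x, by have := hdown (x - J).toNat; omega,
    SameCycle.symm ⟨_, rfl⟩⟩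

lemma isNextOccurrence_of_sameCycle (he : ∀ x, x < e x) {α : Type*} {v : ℤ → α}
    (hv : ∀ a b, v a = v b ↔ e.SameCycle a b) : IsNextOccurrence v e := by
  intro x
  refine ⟨⟨he x, (hv _ _).2 (sameCycle_apply_left.2 (SameCycle.refl e x))⟩, ?_⟩
  rintro j ⟨hxj, hj⟩
  obtain ⟨m, rfl⟩ := ((hv _ _).1 hj).symm
  have hmono := strictMono_zpow_apply he x
  have hm : 0 < m := hmono.lt_iff_lt.1 (by simpa using hxj)
  simpa using hmono.monotone (show 1 ≤ m by omega)

lemma sameCycle_add_add_iff {p : ℤ} (hep : ∀ x, e (x + p) = e x + p) {a b : ℤ} :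
    e.SameCycle (a + p) (b + p) ↔ e.SameCycle a b := by
  have hconj : Equiv.addRight p * e * (Equiv.addRight p)⁻¹ = e := by
    ext x
    simpa [sub_eq_add_neg] using (hep (x - p)).symm
  conv_lhs => rw [← hconj]
  rw [sameCycle_conj]
  simp

lemma sum_sub_eq_mul_card_quotient_sameCycle (he : ∀ x, x < e x) {n C : ℤ} (hn : 0 < n)
    (hen : ∀ x, e (x + n) = e x + n) (hC : ∀ x, e x ≤ x + C) :
    ∑ j ∈ Ico 0 n, (e j - j) = n * Nat.card (Quotient (SameCycle.setoid e)) := by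
  have hq : IsNextOccurrence (Quotient.mk (SameCycle.setoid e)) e :=
    isNextOccurrence_of_sameCycle he fun _ _ => Quotient.eq
  rw [hq.sum_sub_eq (fun x J => ?_) hC hn hen, Quotient.mk_surjective.range_eq, Set.ncard_univ]
  obtain ⟨t, htJ, htx⟩ := exists_sameCycle_le he x J
  exact ⟨t, htJ, Quotient.sound htx⟩

end Equiv.Perm

section Matrices

variable {k n : ℕ} {v : ℤ → Fin (k + 1) → ℂ} {f : ℤ → ℤ}

lemma ValidMatrix.exists_surjective_rowIndex (hv : ValidMatrix k n v) :
    ∃ c : ℤ → Fin (k + 1), Surjective c ∧ ∀ j, v j = Pi.single (c j) 1 := by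
  obtain ⟨-, hcols, hrows, -⟩ := hv
  choose c hc using hcols
  refine ⟨c, fun ℓ => ?_, hc⟩
  obtain ⟨j, hj⟩ := hrows ℓ
  refine ⟨j, by_contra fun hne => hj ?_⟩
  rw [hc, Pi.single_apply, if_neg (Ne.symm hne)]

lemma ValidMatrix.ncard_range (hv : ValidMatrix k n v) : (Set.range v).ncard = k + 1 := by
  obtain ⟨c, hc, hvc⟩ := hv.exists_surjective_rowIndex
  rw [show v = (fun ℓ => Pi.single ℓ 1) ∘ c from funext hvc, hc.range_comp,
    Set.ncard_range_of_injective fun _ _ => Pi.single_one_inj.1, Nat.card_fin]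

lemma ValidMatrix.exists_periodic (hn : 0 < n) (hv : ValidMatrix k n v) :
    ∃ N : ℤ, 0 < N ∧ Periodic v N := by
  obtain ⟨⟨h, hh, hper⟩, -⟩ := hv
  exact ⟨h * n, by positivity, hper⟩

lemma ValidMatrix.add_eq_add_iff (hv : ValidMatrix k n v) (a b : ℤ) :
    v (a + n) = v (b + n) ↔ v a = v b := by
  obtain ⟨-, -, -, σ, hσ⟩ := hv
  simp only [show ∀ a, v (a + n) = v a ∘ σ from fun a => funext (hσ a)]
  exact σ.surjective.injective_comp_right.eq_iff

lemma exists_isFA (hn : 0 < n) (hv : ValidMatrix k n v) : ∃ f, IsFA v f := by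
  obtain ⟨N, hN, hper⟩ := hv.exists_periodic hn
  have hex : ∀ x, ∃ m, IsLeast {j | x < j ∧ v j = v x} m := fun x =>
    Int.exists_least_of_bdd ⟨x, fun _ h => h.1.le⟩ ⟨x + N, by omega, hper x⟩
  choose g hg using hex
  exact ⟨fun i => g (i - 1), isFA_iff.2 fun x => by simpa using hg x⟩

lemma isSkPlus_of_isFA (hn : 0 < n) (hv : ValidMatrix k n v) (hf : IsFA v f) :
    IsSkPlus k n f := by
  obtain ⟨N, hN, hper⟩ := hv.exists_periodic hn
  have hg := isFA_iff.1 hf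
  have hrec := hper.exists_le_apply_eq hN
  have hgn := hg.map_add hv.add_eq_add_iff
  have hC : ∀ x, f (x + 1) ≤ x + N := fun x => hg.le_of_apply_eq (by omega) (hper x)
  have hfg : f = (fun x => f (x + 1)) ∘ Equiv.subRight 1 := funext fun i => by simp
  refine ⟨hfg ▸ (Bijective.comp ⟨hg.injective, hg.surjective hrec⟩ (Equiv.bijective _)),
    fun i => ?_, fun i => ?_, ?_⟩
  · simpa [sub_add_eq_add_sub] using hgn (i - 1)
  · simpa [Int.sub_one_lt_iff] using hg.lt_apply (i - 1)
  · have hsum := hg.sum_sub_eq hrec hC (by exact_mod_cast hn) hgn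
    rw [← sum_Icc_sub_add, hv.ncard_range] at hsum
    push_cast at hsum
    linarith

lemma validMatrix_of_surjective {c : ℤ → Fin (k + 1)} (hc : Surjective c)
    (hcn : ∀ a b, c (a + n) = c (b + n) ↔ c a = c b) :
    ValidMatrix k n fun j => Pi.single (c j) 1 := by
  obtain ⟨σ, hσ⟩ := exists_perm_apply_eq_of_ker_eq hc
    (hc.comp (Equiv.addRight (n : ℤ)).surjective) fun a b => (hcn a b).symm
  have hper := periodic_orderOf_mul (τ := σ.symm) (p := n) fun j =>
    (σ.symm_apply_eq.2 (hσ j).symm).symm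
  refine ⟨⟨orderOf σ.symm, orderOf_pos _, fun j => by simp only [hper j]⟩, fun j => ⟨c j, rfl⟩,
    fun ℓ => ?_, σ, fun j ℓ => single_apply_perm 1 (hσ j) ℓ⟩
  obtain ⟨j, rfl⟩ := hc ℓ
  exact ⟨j, by simp⟩

lemma exists_validMatrix_of_isSkPlus (hn : 0 < n) (hf : IsSkPlus k n f) :
    ∃ v : ℤ → Fin (k + 1) → ℂ, ValidMatrix k n v ∧ IsFA v f := by
  obtain ⟨hbij, hfn, hle, hsum⟩ := hf
  let e : Equiv.Perm ℤ := (Equiv.addRight 1).trans (Equiv.ofBijective f hbij)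
  have he_apply : ∀ x, e x = f (x + 1) := fun _ => rfl
  have he : ∀ x, x < e x := fun x => by linarith [he_apply x, hle (x + 1)]
  have hen : ∀ x, e (x + n) = e x + n := fun x => by
    rw [he_apply, he_apply, add_right_comm, hfn]
  have hper : Periodic (fun i => f i - i) n := fun i => by simp [hfn]
  have hC : ∀ x, e x ≤ x + (k * n + 1) := fun x => by
    have := hper.le_sum_Icc (by exact_mod_cast hn) (fun i => by linarith [hle i]) (x + 1)
    rw [hsum] at this
    linarith [he_apply x]
  have hcard : Nat.card (Quotient (Equiv.Perm.SameCycle.setoid e)) = k + 1 := by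
    have := e.sum_sub_eq_mul_card_quotient_sameCycle he (by exact_mod_cast hn) hen hC
    simp only [he_apply, ← sum_Icc_sub_add, hsum] at this
    exact_mod_cast mul_left_cancel₀ (by positivity : (n : ℤ) ≠ 0)
      (by linarith : (n : ℤ) * Nat.card (Quotient (Equiv.Perm.SameCycle.setoid e)) = n * (k + 1))
  obtain ⟨c, hc, hce⟩ := Setoid.exists_surjective_fin_of_card_quotient hcard
  refine ⟨_, validMatrix_of_surjective hc fun a b => ?_,
    isFA_iff.2 (Equiv.Perm.isNextOccurrence_of_sameCycle he fun a b => ?_)⟩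
  · rw [hce, hce]
    exact Equiv.Perm.sameCycle_add_add_iff hen
  · rw [Pi.single_one_inj]
    exact hce a b

lemma matrixEquiv_of_isFA {v v' : ℤ → Fin (k + 1) → ℂ} (hv : ValidMatrix k n v)
    (hv' : ValidMatrix k n v') (hf : IsFA v f) (hf' : IsFA v' f) : MatrixEquiv k n v v' := by
  obtain ⟨c, hc, hvc⟩ := hv.exists_surjective_rowIndex
  obtain ⟨c', hc', hvc'⟩ := hv'.exists_surjective_rowIndex
  obtain ⟨σ, hσ⟩ := exists_perm_apply_eq_of_ker_eq hc hc' fun a b => by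
    simpa only [hvc, hvc', Pi.single_one_inj] using (isFA_iff.1 hf).ker_eq (isFA_iff.1 hf') a b
  exact ⟨σ, 0, fun j ℓ => by rw [zero_mul, add_zero, hvc, hvc']; exact single_apply_perm 1 (hσ j) ℓ⟩

end Matrices

theorem fA_bijection_general (k n : ℕ) (hkn : k < n) :
    (∀ v : ℤ → Fin (k + 1) → ℂ, ValidMatrix k n v →
      ∃ f : ℤ → ℤ, IsFA v f ∧ IsSkPlus k n f) ∧
    (∀ f : ℤ → ℤ, IsSkPlus k n f →
      ∃ v : ℤ → Fin (k + 1) → ℂ, ValidMatrix k n v ∧ IsFA v f) ∧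
    (∀ (v v' : ℤ → Fin (k + 1) → ℂ) (f : ℤ → ℤ), ValidMatrix k n v → ValidMatrix k n v' →
      IsFA v f → IsFA v' f → MatrixEquiv k n v v') := by
  have hn : 0 < n := by omega
  refine ⟨fun v hv => ?_, fun f hf => exists_validMatrix_of_isSkPlus hn hf,
    fun v v' f hv hv' hf hf' => matrixEquiv_of_isFA hv hv' hf hf'⟩
  obtain ⟨f, hf⟩ := exists_isFA hn hv
  exact ⟨f, hf, isSkPlus_of_isFA hn hv hf⟩

/-- The assignment `A ↦ f_A` is a bijection from equivalence classes of valid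
matrices onto `S̃_n^{k,+}`: it is well defined, surjective, and injective up to
matrix equivalence. -/
theorem fA_bijection (k n : ℕ) (hk : 0 < k) (hkn : k < n) :
    (∀ v : ℤ → Fin (k + 1) → ℂ, ValidMatrix k n v →
      ∃ f : ℤ → ℤ, IsFA v f ∧ IsSkPlus k n f) ∧
    (∀ f : ℤ → ℤ, IsSkPlus k n f →
      ∃ v : ℤ → Fin (k + 1) → ℂ, ValidMatrix k n v ∧ IsFA v f) ∧
    (∀ (v v' : ℤ → Fin (k + 1) → ℂ) (f : ℤ → ℤ), ValidMatrix k n v → ValidMatrix k n v' →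
      IsFA v f → IsFA v' f → MatrixEquiv k n v v') :=
  fA_bijection_general k n hkn
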